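/- Let A, B be nonempty finite types, λ > 1 a real number, and ρ a density matrix indexed by A×B. Then the infimum, over positive definite density matrices σ indexed by B, of D_λ(ρ ‖ 1_A⊗σ) equals (λ/(λ−1))·ln Tr[ (Tr_A(ρ^λ))^{1/λ} ]. (This expresses K_λ(A⟩B)_ρ in closed form; equivalently K_λ(A⟩B)_ρ = (λ/(1−λ))·E₀(λ⁻¹−1) where E₀(s) := −ln Tr[ (Tr_A(ρ^{1/(s+1)}))^{s+1} ].) -/

import Mathlib

open scoped Kronecker
open Matrix
open scoped ComplexOrder

/-- Apply a real function to a Hermitian matrix via the functional calculus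
(spectral decomposition); returns 0 for non-Hermitian input. -/
noncomputable def matFun {n : Type*} [Fintype n] [DecidableEq n]
    (M : Matrix n n ℂ) (f : ℝ → ℝ) : Matrix n n ℂ :=
  if h : M.IsHermitian then
    (h.eigenvectorUnitary : Matrix n n ℂ) *
      Matrix.diagonal (fun i => (f (h.eigenvalues i) : ℂ)) *
      (star (h.eigenvectorUnitary : Matrix n n ℂ))
  else 0

/-- Real power of a (Hermitian positive semidefinite) matrix, with the
convention `0 ^ t = 0` for every real `t`. -/
noncomputable def mpow {n : Type*} [Fintype n] [DecidableEq n]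
    (M : Matrix n n ℂ) (t : ℝ) : Matrix n n ℂ :=
  matFun M (fun x => if x = 0 then 0 else x ^ t)

/-- Real part of the trace. -/
noncomputable def trR {n : Type*} [Fintype n] (M : Matrix n n ℂ) : ℝ :=
  (Matrix.trace M).re

/-- Partial trace over the first tensor factor. -/
noncomputable def ptrA {A B : Type*} [Fintype A]
    (M : Matrix (A × B) (A × B) ℂ) : Matrix B B ℂ :=
  Matrix.of fun b b' => ∑ a : A, M (a, b) (a, b')

/-- Quantum Rényi divergence of order `lam`. -/
noncomputable def renyiD {n : Type*} [Fintype n] [DecidableEq n]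
    (lam : ℝ) (X Y : Matrix n n ℂ) : ℝ :=
  (1 / (lam - 1)) * Real.log (trR (mpow X lam * mpow Y (1 - lam)))

/-- The quantity `K_lam(A⟩B)_ρ`: infimum over positive definite density
matrices `σ` on `B` of `D_lam(ρ ‖ 1_A ⊗ σ)`. -/
noncomputable def Kinf {A B : Type*} [Fintype A] [Fintype B]
    [DecidableEq A] [DecidableEq B]
    (lam : ℝ) (ρ : Matrix (A × B) (A × B) ℂ) : ℝ :=
  ⨅ σ : {σ : Matrix B B ℂ // σ.PosDef ∧ σ.trace = 1},
    renyiD lam ρ ((1 : Matrix A A ℂ) ⊗ₖ (σ : Matrix B B ℂ))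

/-- The CPTP map determined by a finite family of Kraus operators. -/
noncomputable def krausMap {ι n m : Type*} [Fintype ι] [Fintype n] [Fintype m]
    (K : ι → Matrix m n ℂ) (X : Matrix n n ℂ) : Matrix m m ℂ :=
  ∑ j, K j * X * (K j)ᴴ

/-- Trace of the positive part of a Hermitian matrix. -/
noncomputable def trPos {n : Type*} [Fintype n] [DecidableEq n]
    (X : Matrix n n ℂ) : ℝ :=
  if h : X.IsHermitian then ∑ i, max (h.eigenvalues i) 0 else 0

/-- Binary Rényi quantity `𝔻_lam(α‖β)`. -/
noncomputable def binD (lam α β : ℝ) : ℝ :=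
  (1 / (lam - 1)) *
    Real.log (α ^ lam * β ^ (1 - lam) + (1 - α) ^ lam * (β⁻¹ - β) ^ (1 - lam))

/-!
Write `M = Tr_A ρ^λ = ∑ mᵢ |vᵢ⟩⟨vᵢ|` and `σ = ∑ sⱼ |wⱼ⟩⟨wⱼ|`. Since
`(1_A ⊗ σ)^{1-λ} = 1_A ⊗ σ^{1-λ}`, we get
`Tr[ρ^λ (1_A ⊗ σ)^{1-λ}] = Tr[M σ^{1-λ}] = ∑ᵢⱼ mᵢ sⱼ^{1-λ} |⟨vᵢ, wⱼ⟩|²`. The overlaps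
`|⟨vᵢ, wⱼ⟩|²` form a doubly stochastic matrix, so weighted Hölder bounds this sum below by
`(∑ mᵢ^{1/λ})^λ = (Tr M^{1/λ})^λ`. The bound is the infimum: it is approached by
`σ ∝ M^{1/λ} + ε` as `ε → 0⁺`, whereas the minimizer `M^{1/λ} / Tr M^{1/λ}` need not be
invertible.
-/

section FunctionalCalculus

variable {n : Type*} [Fintype n] [DecidableEq n]

lemma matFun_of_isHermitian {M : Matrix n n ℂ} (hM : M.IsHermitian) (f : ℝ → ℝ) :
    matFun M f = (hM.eigenvectorUnitary : Matrix n n ℂ) *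
      diagonal (fun i => (f (hM.eigenvalues i) : ℂ)) *
      star (hM.eigenvectorUnitary : Matrix n n ℂ) :=
  dif_pos hM

lemma isHermitian_mul_diagonal_mul_star (U : Matrix n n ℂ) (d : n → ℝ) :
    (U * diagonal (fun i => (d i : ℂ)) * star U).IsHermitian :=
  isHermitian_mul_mul_conjTranspose U (isHermitian_diagonal_iff.mpr fun _ => Complex.conj_ofReal _)

lemma diagonal_map_mul_eq_mul_diagonal_map {m : Type*} [Fintype m] [DecidableEq m]
    {W : Matrix m n ℂ} {a : m → ℝ} {b : n → ℝ}
    (h : diagonal (fun i => (a i : ℂ)) * W = W * diagonal (fun j => (b j : ℂ))) (f : ℝ → ℝ) :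
    diagonal (fun i => (f (a i) : ℂ)) * W = W * diagonal (fun j => (f (b j) : ℂ)) := by
  ext i j
  have hij := congr_fun₂ h i j
  simp only [diagonal_mul, mul_diagonal] at hij ⊢
  by_cases hW : W i j = 0
  · simp [hW]
  · have hab : a i = b j := by
      rw [mul_comm] at hij
      exact_mod_cast mul_left_cancel₀ hW hij
    rw [hab, mul_comm]

lemma matFun_unitary_conj {U : Matrix n n ℂ} (hU : U ∈ unitaryGroup n ℂ) (d : n → ℝ)
    (f : ℝ → ℝ) :
    matFun (U * diagonal (fun i => (d i : ℂ)) * star U) f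
      = U * diagonal (fun i => (f (d i) : ℂ)) * star U := by
  have hX := isHermitian_mul_diagonal_mul_star U d
  set E : Matrix n n ℂ := (hX.eigenvectorUnitary : Matrix n n ℂ)
  have hE : E ∈ unitaryGroup n ℂ := hX.eigenvectorUnitary.2
  rw [matFun_of_isHermitian hX]
  -- `star E * U` intertwines the two diagonalizations of the same matrix.
  have hW : diagonal (fun i => (hX.eigenvalues i : ℂ)) * (star E * U)
      = (star E * U) * diagonal (fun i => (d i : ℂ)) := by
    have hspec : E * diagonal (fun i => (hX.eigenvalues i : ℂ)) * star E
        = U * diagonal (fun i => (d i : ℂ)) * star U := hX.spectral_theorem.symm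
    calc _ = star E * (E * diagonal (fun i => (hX.eigenvalues i : ℂ)) * star E) * U := by
          simp only [Matrix.mul_assoc, ← Matrix.mul_assoc (star E) E,
            mem_unitaryGroup_iff'.mp hE, Matrix.one_mul]
      _ = star E * (U * diagonal (fun i => (d i : ℂ)) * star U) * U := by
          rw [hspec]
      _ = _ := by
          simp only [Matrix.mul_assoc, mem_unitaryGroup_iff'.mp hU, Matrix.mul_one]
  calc E * diagonal (fun i => (f (hX.eigenvalues i) : ℂ)) * star E
      = E * (diagonal (fun i => (f (hX.eigenvalues i) : ℂ)) * (star E * U)) * star U := by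
        simp only [Matrix.mul_assoc, mem_unitaryGroup_iff.mp hU, Matrix.mul_one]
    _ = U * diagonal (fun i => (f (d i) : ℂ)) * star U := by
        rw [diagonal_map_mul_eq_mul_diagonal_map hW]
        simp only [← Matrix.mul_assoc, mem_unitaryGroup_iff.mp hE, Matrix.one_mul]

lemma trace_unitary_conj {U : Matrix n n ℂ} (hU : U ∈ unitaryGroup n ℂ) (x : n → ℂ) :
    trace (U * diagonal x * star U) = ∑ i, x i := by
  rw [trace_mul_cycle, mem_unitaryGroup_iff'.mp hU, Matrix.one_mul, trace_diagonal]

lemma trace_matFun {M : Matrix n n ℂ} (hM : M.IsHermitian) (f : ℝ → ℝ) :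
    trace (matFun M f) = ∑ i, (f (hM.eigenvalues i) : ℂ) := by
  rw [matFun_of_isHermitian, trace_unitary_conj hM.eigenvectorUnitary.2]

lemma posSemidef_matFun {M : Matrix n n ℂ} (hM : M.IsHermitian) {f : ℝ → ℝ}
    (hf : ∀ i, 0 ≤ f (hM.eigenvalues i)) : (matFun M f).PosSemidef := by
  rw [matFun_of_isHermitian, star_eq_conjTranspose]
  exact (PosSemidef.diagonal fun i => by simpa using hf i).mul_mul_conjTranspose_same _

lemma Matrix.PosSemidef.mpow {M : Matrix n n ℂ} (hM : M.PosSemidef) (t : ℝ) :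
    (mpow M t).PosSemidef :=
  posSemidef_matFun hM.1 fun i => by
    split_ifs
    exacts [le_rfl, Real.rpow_nonneg (hM.eigenvalues_nonneg i) t]

lemma mpow_eq_matFun_rpow (M : Matrix n n ℂ) {t : ℝ} (ht : t ≠ 0) :
    mpow M t = matFun M (fun x => x ^ t) := by
  unfold mpow
  congr 1
  funext x
  split_ifs with hx
  · rw [hx, Real.zero_rpow ht]
  · rfl

lemma trR_mpow {M : Matrix n n ℂ} (hM : M.IsHermitian) {t : ℝ} (ht : t ≠ 0) :
    trR (mpow M t) = ∑ i, hM.eigenvalues i ^ t := by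
  rw [trR, mpow_eq_matFun_rpow M ht, trace_matFun hM, ← Complex.ofReal_sum, Complex.ofReal_re]

lemma trR_eq_sum_eigenvalues {M : Matrix n n ℂ} (hM : M.IsHermitian) :
    trR M = ∑ i, hM.eigenvalues i := by
  simpa [trR] using congrArg Complex.re hM.trace_eq_sum_eigenvalues

lemma trR_mpow_pos {M : Matrix n n ℂ} (hM : M.PosSemidef) (hpos : 0 < trR M) {t : ℝ}
    (ht : t ≠ 0) :
    0 < trR (mpow M t) := by
  rw [trR_eq_sum_eigenvalues hM.1] at hpos
  obtain ⟨i, -, hi⟩ := Finset.exists_lt_of_sum_lt (by simpa using hpos : ∑ _i : n, (0 : ℝ) < _)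
  rw [trR_mpow hM.1 ht]
  exact Finset.sum_pos' (fun j _ => Real.rpow_nonneg (hM.eigenvalues_nonneg j) t)
    ⟨i, Finset.mem_univ i, Real.rpow_pos_of_pos hi t⟩

end FunctionalCalculus

section PartialTrace

variable {A B : Type*} [Fintype A]

lemma ptrA_eq_sum_submatrix (X : Matrix (A × B) (A × B) ℂ) :
    ptrA X = ∑ a, X.submatrix (Prod.mk a) (Prod.mk a) := by
  ext b b'
  simp [ptrA, Matrix.sum_apply]

lemma Matrix.PosSemidef.ptrA {X : Matrix (A × B) (A × B) ℂ} (hX : X.PosSemidef) :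
    (ptrA X).PosSemidef := by
  rw [ptrA_eq_sum_submatrix]
  exact posSemidef_sum _ fun a _ => hX.submatrix _

variable [Fintype B]

lemma trace_ptrA (X : Matrix (A × B) (A × B) ℂ) : trace (ptrA X) = trace X := by
  simp only [ptrA, trace, diag, of_apply, Fintype.sum_prod_type]
  exact Finset.sum_comm

variable [DecidableEq A]

lemma trace_mul_one_kronecker (X : Matrix (A × B) (A × B) ℂ) (T : Matrix B B ℂ) :
    trace (X * ((1 : Matrix A A ℂ) ⊗ₖ T)) = trace (ptrA X * T) := by
  simp only [trace, diag, mul_apply, kroneckerMap_apply, one_apply, ptrA, of_apply,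
    Fintype.sum_prod_type, ite_mul, one_mul, zero_mul, Finset.sum_mul]
  simp only [mul_ite, mul_zero, Finset.sum_ite_irrel, Finset.sum_const_zero, Finset.sum_ite_eq',
    Finset.mem_univ, if_true]
  rw [Finset.sum_comm]
  exact Finset.sum_congr rfl fun _ _ => Finset.sum_comm

variable [DecidableEq B]

lemma one_kronecker_mul_diagonal_mul_star (V : Matrix B B ℂ) (x : B → ℂ) :
    (1 : Matrix A A ℂ) ⊗ₖ (V * diagonal x * star V)
      = ((1 : Matrix A A ℂ) ⊗ₖ V) * diagonal (fun p : A × B => x p.2)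
          * star ((1 : Matrix A A ℂ) ⊗ₖ V) := by
  have hx : diagonal (fun p : A × B => x p.2) = (1 : Matrix A A ℂ) ⊗ₖ diagonal x := by
    rw [← diagonal_one, diagonal_kronecker_diagonal]
    simp
  simp only [hx, star_eq_conjTranspose, conjTranspose_kronecker, conjTranspose_one,
    ← mul_kronecker_mul, Matrix.mul_one]

lemma one_kronecker_mem_unitaryGroup {V : Matrix B B ℂ} (hV : V ∈ unitaryGroup B ℂ) :
    (1 : Matrix A A ℂ) ⊗ₖ V ∈ unitaryGroup (A × B) ℂ := by
  rw [mem_unitaryGroup_iff] at hV ⊢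
  simp only [star_eq_conjTranspose, conjTranspose_kronecker, conjTranspose_one] at hV ⊢
  rw [← mul_kronecker_mul, Matrix.mul_one, hV, one_kronecker_one]

lemma matFun_one_kronecker {σ : Matrix B B ℂ} (hσ : σ.IsHermitian) (f : ℝ → ℝ) :
    matFun ((1 : Matrix A A ℂ) ⊗ₖ σ) f = (1 : Matrix A A ℂ) ⊗ₖ matFun σ f := by
  set V : Matrix B B ℂ := (hσ.eigenvectorUnitary : Matrix B B ℂ)
  have hspec : σ = V * diagonal (fun j => (hσ.eigenvalues j : ℂ)) * star V :=
    hσ.spectral_theorem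
  rw [matFun_of_isHermitian hσ, one_kronecker_mul_diagonal_mul_star]
  conv_lhs => rw [hspec, one_kronecker_mul_diagonal_mul_star]
  exact matFun_unitary_conj (one_kronecker_mem_unitaryGroup hσ.eigenvectorUnitary.2)
    (fun p => hσ.eigenvalues p.2) f

lemma mpow_one_kronecker {σ : Matrix B B ℂ} (hσ : σ.IsHermitian) (t : ℝ) :
    mpow ((1 : Matrix A A ℂ) ⊗ₖ σ) t = (1 : Matrix A A ℂ) ⊗ₖ mpow σ t :=
  matFun_one_kronecker hσ _

end PartialTrace

section DoublyStochastic

variable {n : Type*} [Fintype n] [DecidableEq n]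

lemma re_trace_mul_diagonal_mul_star_mul (U V : Matrix n n ℂ) (x y : n → ℝ) :
    (trace (U * diagonal (fun i => (x i : ℂ)) * star U *
        (V * diagonal (fun j => (y j : ℂ)) * star V))).re
      = ∑ i, ∑ j, x i * y j * Complex.normSq ((star U * V) i j) := by
  have hcycle : trace (U * diagonal (fun i => (x i : ℂ)) * star U *
        (V * diagonal (fun j => (y j : ℂ)) * star V))
      = trace (diagonal (fun i => (x i : ℂ)) * (star U * V) * diagonal (fun j => (y j : ℂ))
          * star (star U * V)) := by
    simp only [StarMul.star_mul, star_star, Matrix.mul_assoc]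
    rw [trace_mul_comm U]
    simp only [Matrix.mul_assoc]
  generalize star U * V = W at hcycle
  have hentry (i : n) : (diagonal (fun i => (x i : ℂ)) * W * diagonal (fun j => (y j : ℂ))
      * star W) i i = ∑ j, ((x i * y j * Complex.normSq (W i j) : ℝ) : ℂ) := by
    rw [mul_apply]
    refine Finset.sum_congr rfl fun j _ => ?_
    rw [mul_diagonal, diagonal_mul, star_apply, Complex.star_def, Complex.ofReal_mul,
      Complex.normSq_eq_conj_mul_self]
    push_cast
    ring
  rw [hcycle, trace]
  simp only [diag, hentry, Complex.re_sum, Complex.ofReal_re]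

lemma normSq_mem_doublyStochastic {W : Matrix n n ℂ} (hW : W ∈ unitaryGroup n ℂ) :
    of (fun i j => Complex.normSq (W i j)) ∈ doublyStochastic ℝ n := by
  have hnormSq (z : ℂ) : z * star z = (Complex.normSq z : ℂ) := Complex.mul_conj z
  refine mem_doublyStochastic_iff_sum.mpr
    ⟨fun i j => Complex.normSq_nonneg _, fun i => ?_, fun j => ?_⟩
  · have h := congr_fun₂ (mem_unitaryGroup_iff.mp hW) i i
    simp only [mul_apply, star_apply, hnormSq, one_apply_eq] at h
    exact_mod_cast h
  · have h := congr_fun₂ (mem_unitaryGroup_iff'.mp hW) j j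
    simp only [mul_apply, star_apply, mul_comm (star _), hnormSq, one_apply_eq] at h
    exact_mod_cast h

lemma rpow_sum_rpow_inv_le_sum_mul_rpow {p : ℝ} (hp : 1 ≤ p) {m : n → ℝ} (hm : ∀ i, 0 ≤ m i)
    {s : n → ℝ} (hs : ∀ j, 0 < s j) (hs1 : ∑ j, s j = 1) {P : Matrix n n ℝ}
    (hP : P ∈ doublyStochastic ℝ n) :
    (∑ i, m i ^ (1 / p)) ^ p ≤ ∑ i, ∑ j, m i * s j ^ (1 - p) * P i j := by
  obtain ⟨hP0, hProw, hPcol⟩ := mem_doublyStochastic_iff_sum.mp hP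
  -- weighted Hölder with weights `P i j * s j` and values `m i ^ (1 / p) / s j`
  have holder := Real.inner_le_weight_mul_Lp_of_nonneg Finset.univ hp
    (fun q : n × n => P q.1 q.2 * s q.2) (fun q => m q.1 ^ p⁻¹ / s q.2)
    (fun q => mul_nonneg (hP0 _ _) (hs _).le)
    (fun q => div_nonneg (Real.rpow_nonneg (hm _) _) (hs _).le)
  have hwf : ∑ q : n × n, P q.1 q.2 * s q.2 * (m q.1 ^ p⁻¹ / s q.2) = ∑ i, m i ^ p⁻¹ := by
    simp only [Fintype.sum_prod_type, mul_assoc, mul_div_cancel₀ _ (hs _).ne', ← Finset.sum_mul,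
      hProw, one_mul]
  have hw : ∑ q : n × n, P q.1 q.2 * s q.2 = 1 := by
    rw [Fintype.sum_prod_type, Finset.sum_comm]
    simp only [← Finset.sum_mul, hPcol, one_mul, hs1]
  have hwfp : ∑ q : n × n, P q.1 q.2 * s q.2 * (m q.1 ^ p⁻¹ / s q.2) ^ p
      = ∑ i, ∑ j, m i * s j ^ (1 - p) * P i j := by
    rw [Fintype.sum_prod_type]
    refine Finset.sum_congr rfl fun i _ => Finset.sum_congr rfl fun j _ => ?_
    rw [Real.div_rpow (Real.rpow_nonneg (hm i) _) (hs j).le,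
      Real.rpow_inv_rpow (hm i) (by linarith), Real.rpow_sub (hs j), Real.rpow_one]
    field_simp
  rw [hwf, hw, hwfp, Real.one_rpow, one_mul] at holder
  rw [one_div]
  exact (Real.le_rpow_inv_iff_of_pos (Finset.sum_nonneg fun i _ => Real.rpow_nonneg (hm i) _)
    (Finset.sum_nonneg fun i _ => Finset.sum_nonneg fun j _ =>
      mul_nonneg (mul_nonneg (hm i) (Real.rpow_nonneg (hs j).le _)) (hP0 i j))
    (by linarith)).mp holder

end DoublyStochastic

section Approximation

variable {n : Type*} [Fintype n]

open Filter Topology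

lemma tendsto_sum_mul_rpow_normalized {m : n → ℝ} (hm : ∀ i, 0 ≤ m i) {lam : ℝ} (hlam : lam ≠ 0)
    (hc : 0 < ∑ i, m i ^ (1 / lam)) :
    Tendsto (fun ε => ∑ j, m j * ((m j ^ (1 / lam) + ε) / ∑ k, (m k ^ (1 / lam) + ε)) ^ (1 - lam))
      (𝓝 0) (𝓝 ((∑ i, m i ^ (1 / lam)) ^ lam)) := by
  set c := ∑ i, m i ^ (1 / lam)
  have hsum : ∑ j, m j ^ (1 / lam) * c ^ (lam - 1) = c ^ lam := by
    rw [← Finset.sum_mul, ← Real.rpow_one_add' hc.le (by simpa using hlam), add_sub_cancel]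
  rw [← hsum]
  refine tendsto_finsetSum _ fun j _ => ?_
  rcases (hm j).eq_or_lt with h0 | hpos
  · simp only [← h0, zero_mul, Real.zero_rpow (one_div_ne_zero hlam)]
    exact tendsto_const_nhds
  have hw : Tendsto (fun ε => (m j ^ (1 / lam) + ε) / ∑ k, (m k ^ (1 / lam) + ε)) (𝓝 0)
      (𝓝 (m j ^ (1 / lam) / c)) := by
    have hden : Tendsto (fun ε : ℝ => ∑ k, (m k ^ (1 / lam) + ε)) (𝓝 0) (𝓝 c) := by
      convert (by fun_prop : Continuous fun ε : ℝ => ∑ k, (m k ^ (1 / lam) + ε)).tendsto 0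
      simp only [add_zero]
    have hnum : Tendsto (fun ε : ℝ => m j ^ (1 / lam) + ε) (𝓝 0) (𝓝 (m j ^ (1 / lam))) := by
      simpa using (continuous_const_add (m j ^ (1 / lam))).tendsto 0
    exact hnum.div hden hc.ne'
  have hval : m j * (m j ^ (1 / lam) / c) ^ (1 - lam) = m j ^ (1 / lam) * c ^ (lam - 1) := by
    have hm : m j * m j ^ (1 / lam * (1 - lam)) = m j ^ (1 / lam) := by
      conv_rhs => rw [show 1 / lam = 1 + 1 / lam * (1 - lam) by field_simp; ring]
      rw [Real.rpow_add hpos, Real.rpow_one]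
    rw [Real.div_rpow (Real.rpow_nonneg hpos.le _) hc.le, ← Real.rpow_mul hpos.le,
      Real.rpow_sub hc, Real.rpow_sub hc, Real.rpow_one, ← mul_div_assoc, hm]
    field_simp
  rw [← hval]
  exact (hw.rpow_const (Or.inl (div_pos (Real.rpow_pos_of_pos hpos _) hc).ne')).const_mul _

end Approximation

section Bounds

variable {n : Type*} [Fintype n] [DecidableEq n]

open Filter Topology

lemma rpow_trR_mpow_le_trR_mul_mpow {M σ : Matrix n n ℂ} (hM : M.PosSemidef) (hσ : σ.PosDef)
    (hσ1 : σ.trace = 1) {lam : ℝ} (hlam : 1 < lam) :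
    trR (mpow M (1 / lam)) ^ lam ≤ trR (M * mpow σ (1 - lam)) := by
  set V : Matrix n n ℂ := (hM.1.eigenvectorUnitary : Matrix n n ℂ)
  have hM_eq : M = V * diagonal (fun i => (hM.1.eigenvalues i : ℂ)) * star V :=
    hM.1.spectral_theorem
  have hs1 : ∑ j, hσ.1.eigenvalues j = 1 := by
    rw [← trR_eq_sum_eigenvalues, trR, hσ1, Complex.one_re]
  rw [trR_mpow hM.1 (by positivity), trR, mpow_eq_matFun_rpow σ (by linarith),
    matFun_of_isHermitian hσ.1]
  conv_rhs => rw [hM_eq]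
  rw [re_trace_mul_diagonal_mul_star_mul]
  exact rpow_sum_rpow_inv_le_sum_mul_rpow hlam.le hM.eigenvalues_nonneg hσ.eigenvalues_pos hs1
    (normSq_mem_doublyStochastic (star hM.1.eigenvectorUnitary * hσ.1.eigenvectorUnitary).2)

lemma exists_tendsto_trR_mul_mpow {M : Matrix n n ℂ} (hM : M.PosSemidef) {lam : ℝ}
    (hlam : 1 < lam) (hc : 0 < trR (mpow M (1 / lam))) :
    ∃ σ : ℝ → Matrix n n ℂ, (∀ ε > 0, (σ ε).PosDef ∧ (σ ε).trace = 1) ∧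
      Tendsto (fun ε => trR (M * mpow (σ ε) (1 - lam))) (𝓝[>] 0)
        (𝓝 (trR (mpow M (1 / lam)) ^ lam)) := by
  set V : Matrix n n ℂ := (hM.1.eigenvectorUnitary : Matrix n n ℂ)
  have hV : V ∈ unitaryGroup n ℂ := hM.1.eigenvectorUnitary.2
  set m := hM.1.eigenvalues
  have hM_eq : M = V * diagonal (fun i => (m i : ℂ)) * star V := hM.1.spectral_theorem
  rw [trR_mpow hM.1 (by positivity)] at hc ⊢
  -- `σ ε` is `M ^ (1 / lam) + ε • 1`, normalized to unit trace.
  set w : ℝ → n → ℝ := fun ε j => (m j ^ (1 / lam) + ε) / ∑ k, (m k ^ (1 / lam) + ε)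
  have hden (ε : ℝ) (hε : 0 < ε) : 0 < ∑ k, (m k ^ (1 / lam) + ε) := by
    rw [Finset.sum_add_distrib]
    exact add_pos_of_pos_of_nonneg hc (Finset.sum_nonneg fun _ _ => hε.le)
  have hw_pos (ε : ℝ) (hε : 0 < ε) (j : n) : 0 < w ε j :=
    div_pos (add_pos_of_nonneg_of_pos (Real.rpow_nonneg (hM.eigenvalues_nonneg j) _) hε)
      (hden ε hε)
  have hval (ε : ℝ) : trR (M * mpow (V * diagonal (fun j => (w ε j : ℂ)) * star V) (1 - lam))
      = ∑ j, m j * w ε j ^ (1 - lam) := by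
    rw [trR, mpow_eq_matFun_rpow _ (by linarith), matFun_unitary_conj hV, hM_eq,
      re_trace_mul_diagonal_mul_star_mul, mem_unitaryGroup_iff'.mp hV]
    simp [one_apply, apply_ite Complex.normSq]
  refine ⟨fun ε => V * diagonal (fun j => (w ε j : ℂ)) * star V, fun ε hε => ⟨?_, ?_⟩, ?_⟩
  · exact (IsUnit.posDef_star_right_conjugate_iff Unitary.isUnit_coe).mpr
      (PosDef.diagonal fun j => by exact_mod_cast hw_pos ε hε j)
  · simp only [trace_unitary_conj hV, w, ← Complex.ofReal_sum, ← Finset.sum_div,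
      div_self (hden ε hε).ne', Complex.ofReal_one]
  · simp only [hval]
    exact (tendsto_sum_mul_rpow_normalized hM.eigenvalues_nonneg (by positivity) hc).mono_left
      nhdsWithin_le_nhds

end Bounds

lemma renyiD_one_kronecker {A B : Type*} [Fintype A] [Fintype B] [DecidableEq A] [DecidableEq B]
    (lam : ℝ) (ρ : Matrix (A × B) (A × B) ℂ) {σ : Matrix B B ℂ} (hσ : σ.IsHermitian) :
    renyiD lam ρ ((1 : Matrix A A ℂ) ⊗ₖ σ)
      = 1 / (lam - 1) * Real.log (trR (ptrA (mpow ρ lam) * mpow σ (1 - lam))) := by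
  rw [renyiD, trR, mpow_one_kronecker hσ, trace_mul_one_kronecker]
  rfl

theorem Kinf_closed_form_general
    {A B : Type*} [Fintype A] [Fintype B] [DecidableEq A] [DecidableEq B]
    (lam : ℝ) (hlam : 1 < lam)
    (ρ : Matrix (A × B) (A × B) ℂ) (hρ : ρ.PosSemidef ∧ ρ.trace = 1) :
    Kinf lam ρ =
      (lam / (lam - 1)) * Real.log (trR (mpow (ptrA (mpow ρ lam)) (1 / lam))) := by
  obtain ⟨hρ, hρ1⟩ := hρ
  set M := ptrA (mpow ρ lam)
  have hM : M.PosSemidef := (hρ.mpow lam).ptrA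
  have hc : 0 < trR (mpow M (1 / lam)) := by
    refine trR_mpow_pos hM ?_ (by positivity)
    rw [trR, trace_ptrA, ← trR]
    exact trR_mpow_pos hρ (by simp [trR, hρ1]) (by positivity)
  rw [show lam / (lam - 1) * Real.log (trR (mpow M (1 / lam)))
      = 1 / (lam - 1) * Real.log (trR (mpow M (1 / lam)) ^ lam) by rw [Real.log_rpow hc]; ring]
  obtain ⟨σ, hσ, hlim⟩ := exists_tendsto_trR_mul_mpow hM hlam hc
  have : Nonempty {σ : Matrix B B ℂ // σ.PosDef ∧ σ.trace = 1} := ⟨⟨σ 1, hσ 1 one_pos⟩⟩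
  refine ciInf_eq_of_forall_ge_of_forall_gt_exists_lt (fun τ => ?_) (fun w hw => ?_)
  · rw [renyiD_one_kronecker lam ρ τ.2.1.1]
    exact mul_le_mul_of_nonneg_left (Real.log_le_log (by positivity)
      (rpow_trR_mpow_le_trR_mul_mpow hM τ.2.1 τ.2.2 hlam)) (one_div_pos.mpr (by linarith)).le
  · have hlog := ((Real.continuousAt_log (by positivity)).tendsto.comp hlim).const_mul
      (1 / (lam - 1))
    obtain ⟨ε, hlt, hε⟩ := ((hlog.eventually (gt_mem_nhds hw)).and self_mem_nhdsWithin).exists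
    exact ⟨⟨σ ε, hσ ε hε⟩, by rwa [renyiD_one_kronecker lam ρ (hσ ε hε).1.1]⟩

/-- Closed form of `K_λ(A⟩B)_ρ`:
the infimum over positive definite density matrices `σ` on `B` of
`D_λ(ρ ‖ 1_A⊗σ)` equals `(λ/(λ−1))·ln Tr[(Tr_A ρ^λ)^{1/λ}]`. -/
theorem Kinf_closed_form
    {A B : Type*} [Fintype A] [Fintype B] [DecidableEq A] [DecidableEq B]
    [Nonempty A] [Nonempty B]
    (lam : ℝ) (hlam : 1 < lam)
    (ρ : Matrix (A × B) (A × B) ℂ) (hρ : ρ.PosSemidef ∧ ρ.trace = 1) :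
    Kinf lam ρ =
      (lam / (lam - 1)) * Real.log (trR (mpow (ptrA (mpow ρ lam)) (1 / lam))) :=
  Kinf_closed_form_general lam hlam ρ hρ
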